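/- There exists a finite set X of 55 points in the plane such that for every packing of unit disks (closed unit disks with pairwise disjoint interiors), at least one point of X is not contained in any disk of the packing. -/

import Mathlib

noncomputable section

abbrev E2 := EuclideanSpace ℝ (Fin 2)

def pt (x y : ℝ) : E2 := !₂[x, y]

/-!
The centres of a unit-disk packing are pairwise at distance `≥ 2 = √3 ρ`, where `ρ = 2 / √3`.
Some point of the rectangle `|x| ≤ ρ, |y| ≤ ρ / 2` is at distance `≥ ρ` from every centre: either
the origin is, or some centre `z` lies within `ρ` of it, and then an arc of the circle of radius
`ρ` about `z` lies in the rectangle and has endpoints `ρ` apart. A point at distance exactly `ρ`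
from `z` lies in at most one other open `ρ`-disk (as `Σ |p - cᵢ|² ≥ (1/3) Σ |cᵢ - cⱼ|²` for three
centres), so by connectedness an arc avoiding the point sought lies in a single such disk; but
that disk meets the circle in a cap all of whose chords are shorter than `ρ`. Finally, a 54-point
triangular grid is a `0.1543`-net of the rectangle and `ρ - 0.1543 > 1`, so the grid point nearest
to that point is uncovered; any 55 points containing the grid will do.
-/

open Metric Set

theorem IsPreconnected.exists_subset_of_pairwise_disjoint {α ι : Type*} [TopologicalSpace α]
    {s : Set α} (hs : IsPreconnected s) (hne : s.Nonempty) {U : ι → Set α}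
    (hU : ∀ i, IsOpen (U i)) (hcover : s ⊆ ⋃ i, U i)
    (hdisj : Pairwise fun i j => Disjoint (s ∩ U i) (U j)) : ∃ i, s ⊆ U i := by
  obtain ⟨x, hx⟩ := hne
  obtain ⟨i, hxi⟩ := mem_iUnion.mp (hcover hx)
  have hdisj' : ∀ j ≠ i, ∀ y ∈ s, y ∈ U i → y ∉ U j := fun j hj y hy hyi hyj =>
    (hdisj hj.symm).ne_of_mem ⟨hy, hyi⟩ hyj rfl
  refine ⟨i, ((isPreconnected_iff_subset_of_disjoint.mp hs) (U i) (⋃ (j) (_ : j ≠ i), U j)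
    (hU i) (isOpen_biUnion fun j _ => hU j) ?_ ?_).resolve_right ?_⟩
  · intro y hy
    obtain ⟨j, hyj⟩ := mem_iUnion.mp (hcover hy)
    by_cases hji : j = i
    · exact Or.inl (hji ▸ hyj)
    · exact Or.inr (mem_biUnion hji hyj)
  · refine eq_empty_of_forall_notMem fun y ⟨hy, hyi, hyv⟩ => ?_
    obtain ⟨j, hji, hyj⟩ := mem_iUnion₂.mp hyv
    exact hdisj' j hji y hy hyi hyj
  · intro hsub
    obtain ⟨j, hji, hxj⟩ := mem_iUnion₂.mp (hsub hx)
    exact hdisj' j hji x hx hxi hxj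

section InnerProductSpace

variable {V : Type*} [NormedAddCommGroup V] [InnerProductSpace ℝ V]

theorem dist_sq_add_dist_sq_add_dist_sq_le (p a b q : V) :
    dist a b ^ 2 + dist a q ^ 2 + dist b q ^ 2 ≤
      3 * (dist p a ^ 2 + dist p b ^ 2 + dist p q ^ 2) := by
  have key (u v w : V) :
      ‖u - v‖ ^ 2 + ‖u - w‖ ^ 2 + ‖v - w‖ ^ 2 ≤ 3 * (‖u‖ ^ 2 + ‖v‖ ^ 2 + ‖w‖ ^ 2) := by
    have h₁ := norm_add_sq_real (u + v) w
    have h₂ := norm_add_sq_real u v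
    rw [inner_add_left] at h₁
    rw [norm_sub_sq_real, norm_sub_sq_real, norm_sub_sq_real]
    linarith [sq_nonneg ‖u + v + w‖]
  simpa only [dist_eq_norm, sub_sub_sub_cancel_right, norm_sub_rev p] using
    key (a - p) (b - p) (q - p)

theorem not_dist_lt_and_dist_lt {R : ℝ} {p a b q : V} (hab : √3 * R ≤ dist a b)
    (haq : √3 * R ≤ dist a q) (hbq : √3 * R ≤ dist b q) (hpa : dist p a = R) :
    ¬ (dist p b < R ∧ dist p q < R) := by
  rintro ⟨hpb, hpq⟩
  have hR : 0 ≤ R := hpa ▸ dist_nonneg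
  have h3 : (√3 * R) ^ 2 = 3 * R ^ 2 := by rw [mul_pow, Real.sq_sqrt (by norm_num)]
  have hsq : ∀ {x : ℝ}, √3 * R ≤ x → 3 * R ^ 2 ≤ x ^ 2 := fun hx =>
    h3 ▸ pow_le_pow_left₀ (by positivity) hx 2
  have := dist_sq_add_dist_sq_add_dist_sq_le p a b q
  nlinarith [hsq hab, hsq haq, hsq hbq, dist_nonneg (x := p) (y := b),
    dist_nonneg (x := p) (y := q)]

theorem dist_lt_of_mem_sphere_of_dist_lt {R : ℝ} {x y z w : V} (hx : x ∈ sphere z R)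
    (hy : y ∈ sphere z R) (hxw : dist x w < R) (hyw : dist y w < R) (hzw : √3 * R ≤ dist z w) :
    dist x y < R := by
  rw [mem_sphere] at hx hy
  have hR : 0 ≤ R := hx ▸ dist_nonneg
  set u := x - z
  set v := y - z
  set e := w - z
  have hu : ‖u‖ = R := by rw [← dist_eq_norm, hx]
  have hv : ‖v‖ = R := by rw [← dist_eq_norm, hy]
  have hxw' : ‖u - e‖ < R := by rwa [sub_sub_sub_cancel_right, ← dist_eq_norm]
  have hyw' : ‖v - e‖ < R := by rwa [sub_sub_sub_cancel_right, ← dist_eq_norm]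
  have he : √3 * R ≤ ‖e‖ := by rwa [norm_sub_rev, ← dist_eq_norm]
  have hue : ‖e‖ ^ 2 < 2 * inner ℝ u e := by
    have := norm_sub_sq_real u e
    nlinarith [norm_nonneg (u - e)]
  have hve : ‖e‖ ^ 2 < 2 * inner ℝ v e := by
    have := norm_sub_sq_real v e
    nlinarith [norm_nonneg (v - e)]
  -- the midpoint of `x` and `y` is farther than `‖e‖ / 2 ≥ √3 R / 2` from `z`
  have hsum : ‖e‖ < ‖u + v‖ := by
    have hcs := real_inner_le_norm (u + v) e
    rw [inner_add_left] at hcs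
    nlinarith [norm_nonneg e, norm_nonneg (u + v)]
  have h3 : (√3 * R) ^ 2 = 3 * R ^ 2 := by rw [mul_pow, Real.sq_sqrt (by norm_num)]
  have hpar := parallelogram_law_with_norm ℝ u v
  rw [dist_eq_norm, ← sub_sub_sub_cancel_right x y z]
  nlinarith [norm_nonneg (u - v), norm_nonneg e, pow_le_pow_left₀ (by positivity) he 2]

theorem exists_forall_le_dist_of_isPreconnected {ι : Type*} {R : ℝ} {c : ι → V}
    (hc : Pairwise fun i j => √3 * R ≤ dist (c i) (c j)) {i₀ : ι} {A : Set V}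
    (hA : IsPreconnected A) (hAs : A ⊆ sphere (c i₀) R) {x y : V} (hx : x ∈ A) (hy : y ∈ A)
    (hxy : R ≤ dist x y) : ∃ p ∈ A, ∀ i, R ≤ dist p (c i) := by
  by_contra! hcover
  have hne : ∀ p ∈ A, ∀ i, dist p (c i) < R → i ≠ i₀ := by
    rintro p hp i hpi rfl
    exact hpi.ne (hAs hp)
  have hdisj : Pairwise fun i j => Disjoint (A ∩ ball (c i) R) (ball (c j) R) := by
    refine fun i j hij => disjoint_left.mpr fun p ⟨hp, hpi⟩ hpj => ?_
    have hi := hne p hp i hpi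
    have hj := hne p hp j hpj
    exact not_dist_lt_and_dist_lt (hc hi.symm) (hc hj.symm) (hc hij) (hAs hp) ⟨hpi, hpj⟩
  obtain ⟨j, hj⟩ := hA.exists_subset_of_pairwise_disjoint ⟨x, hx⟩ (fun _ => isOpen_ball)
    (fun p hp => mem_iUnion.mpr (hcover p hp)) hdisj
  have hji := hne x hx j (hj hx)
  exact (dist_lt_of_mem_sphere_of_dist_lt (hAs hx) (hAs hy) (hj hx) (hj hy)
    (hc hji.symm)).not_ge hxy

end InnerProductSpace

namespace UnitDiskPacking

@[simp] theorem pt_apply_zero (x y : ℝ) : pt x y 0 = x := rfl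
@[simp] theorem pt_apply_one (x y : ℝ) : pt x y 1 = y := rfl

theorem continuous_pt {α : Type*} [TopologicalSpace α] {f g : α → ℝ} (hf : Continuous f)
    (hg : Continuous g) : Continuous fun a => pt (f a) (g a) := by
  unfold pt
  fun_prop

theorem dist_sq_eq_sq_add_sq (p q : E2) : dist p q ^ 2 = (p 0 - q 0) ^ 2 + (p 1 - q 1) ^ 2 := by
  simp [EuclideanSpace.dist_sq_eq, Fin.sum_univ_two, Real.dist_eq, sq_abs]

def semicircle (z : E2) (R σ t : ℝ) : E2 := pt (z 0 + σ * R * √(1 - t ^ 2)) (z 1 + R * t)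

theorem continuous_semicircle (z : E2) (R σ : ℝ) : Continuous (semicircle z R σ) :=
  continuous_pt (by fun_prop) (by fun_prop)

theorem dist_semicircle_sq (z : E2) (R : ℝ) {σ : ℝ} (hσ : σ ^ 2 = 1) (s t : ℝ) :
    dist (semicircle z R σ s) (semicircle z R σ t) ^ 2 =
      R ^ 2 * ((√(1 - s ^ 2) - √(1 - t ^ 2)) ^ 2 + (s - t) ^ 2) := by
  rw [dist_sq_eq_sq_add_sq]
  simp only [semicircle, pt_apply_zero, pt_apply_one]
  linear_combination (R * (√(1 - s ^ 2) - √(1 - t ^ 2))) ^ 2 * hσ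

theorem dist_semicircle_center (z : E2) {R σ t : ℝ} (hR : 0 ≤ R) (hσ : σ ^ 2 = 1)
    (ht : t ∈ Icc (-1) 1) : dist (semicircle z R σ t) z = R := by
  have h1 : 0 ≤ 1 - t ^ 2 := by nlinarith [ht.1, ht.2]
  rw [← pow_left_inj₀ dist_nonneg hR two_ne_zero, dist_sq_eq_sq_add_sq]
  simp only [semicircle, pt_apply_zero, pt_apply_one]
  linear_combination (R ^ 2 * (1 - t ^ 2)) * hσ + (σ * R) ^ 2 * Real.sq_sqrt h1

def rect (R : ℝ) : Set E2 := {p | |p 0| ≤ R ∧ |p 1| ≤ R / 2}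

theorem semicircle_mem_rect {z : E2} {R σ t : ℝ} (hR : 0 ≤ R) (hz : |z 0| ≤ R)
    (hσ : σ ^ 2 = 1) (hσz : σ * z 0 ≤ 0) (hy : |z 1 + R * t| ≤ R / 2) :
    semicircle z R σ t ∈ rect R := by
  refine ⟨abs_le_of_sq_le_sq ?_ hR, hy⟩
  have h0 : 0 ≤ √(1 - t ^ 2) := Real.sqrt_nonneg _
  have h1 : √(1 - t ^ 2) ≤ 1 := Real.sqrt_le_one.mpr (by nlinarith)
  have hz' : -R ≤ σ * z 0 := by nlinarith [sq_abs (z 0), abs_nonneg (z 0)]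
  have hx : (z 0 + σ * R * √(1 - t ^ 2)) ^ 2 = (σ * z 0 + R * √(1 - t ^ 2)) ^ 2 := by
    linear_combination (R ^ 2 * √(1 - t ^ 2) ^ 2 - z 0 ^ 2) * hσ
  rw [semicircle, pt_apply_zero, hx]
  nlinarith [mul_le_mul_of_nonneg_left h1 hR, mul_nonneg hR h0]

theorem exists_semicircle_params {β : ℝ} (hβ : |β| ≤ 1) :
    ∃ s t : ℝ, -1 ≤ s ∧ s ≤ t ∧ t ≤ 1 ∧ -(1 / 2) ≤ β + s ∧ β + t ≤ 1 / 2 ∧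
      1 ≤ (√(1 - s ^ 2) - √(1 - t ^ 2)) ^ 2 + (s - t) ^ 2 := by
  obtain ⟨hβ₁, hβ₂⟩ := abs_le.mp hβ
  rcases lt_or_ge (1 / 2) β with hβ' | hβ'
  · refine ⟨-1, 1 / 2 - β, by norm_num, by linarith, by linarith, by linarith, by linarith, ?_⟩
    rw [show (1 : ℝ) - (-1) ^ 2 = 0 by norm_num, Real.sqrt_zero, zero_sub, neg_sq,
      Real.sq_sqrt (by nlinarith)]
    nlinarith
  rcases lt_or_ge β (-(1 / 2)) with hβ'' | hβ''
  · refine ⟨-(1 / 2) - β, 1, by linarith, by linarith, le_rfl, by linarith, by linarith, ?_⟩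
    rw [show (1 : ℝ) - 1 ^ 2 = 0 by norm_num, Real.sqrt_zero, sub_zero,
      Real.sq_sqrt (by nlinarith)]
    nlinarith
  · exact ⟨-(1 / 2) - β, 1 / 2 - β, by linarith, by linarith, by linarith, by linarith,
      by linarith, by nlinarith [sq_nonneg (√(1 - (-(1 / 2) - β) ^ 2) - √(1 - (1 / 2 - β) ^ 2))]⟩

theorem exists_arc_subset_sphere_inter_rect {R : ℝ} (hR : 0 < R) {z : E2} (hz : dist 0 z < R) :
    ∃ A : Set E2, IsPreconnected A ∧ A ⊆ sphere z R ∩ rect R ∧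
      ∃ x ∈ A, ∃ y ∈ A, R ≤ dist x y := by
  have hz' : z 0 ^ 2 + z 1 ^ 2 < R ^ 2 := by
    have := dist_sq_eq_sq_add_sq 0 z
    simp only [PiLp.zero_apply, zero_sub, neg_sq] at this
    nlinarith [dist_nonneg (x := (0 : E2)) (y := z)]
  have hz₀ : |z 0| ≤ R := abs_le_of_sq_le_sq (by nlinarith) hR.le
  set β := z 1 / R
  have hzβ : z 1 = R * β := (mul_div_cancel₀ _ hR.ne').symm
  obtain ⟨s, t, hs, hst, ht, hβs, hβt, hchord⟩ := exists_semicircle_params (β := β) (by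
    rw [abs_div, abs_of_pos hR, div_le_one hR]
    exact abs_le_of_sq_le_sq (by nlinarith) hR.le)
  obtain ⟨σ, hσ, hσz⟩ : ∃ σ : ℝ, σ ^ 2 = 1 ∧ σ * z 0 ≤ 0 := by
    rcases le_total 0 (z 0) with h | h
    exacts [⟨-1, by norm_num, by linarith⟩, ⟨1, by norm_num, by linarith⟩]
  refine ⟨semicircle z R σ '' Icc s t,
    isPreconnected_Icc.image _ (continuous_semicircle z R σ).continuousOn, ?_,
    _, mem_image_of_mem _ (left_mem_Icc.mpr hst), _, mem_image_of_mem _ (right_mem_Icc.mpr hst),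
    ?_⟩
  · rintro _ ⟨τ, hτ, rfl⟩
    refine ⟨dist_semicircle_center z hR.le hσ ⟨hs.trans hτ.1, hτ.2.trans ht⟩,
      semicircle_mem_rect hR.le hz₀ hσ hσz ?_⟩
    rw [hzβ, ← mul_add, abs_mul, abs_of_pos hR, ← mul_one_div]
    gcongr
    exact abs_le.mpr ⟨by linarith [hτ.1], by linarith [hτ.2]⟩
  · rw [← pow_le_pow_iff_left₀ hR.le dist_nonneg two_ne_zero, dist_semicircle_sq z R hσ]
    nlinarith

theorem exists_mem_rect_forall_le_dist {ι : Type*} {R : ℝ} (hR : 0 < R) {c : ι → E2}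
    (hc : Pairwise fun i j => √3 * R ≤ dist (c i) (c j)) :
    ∃ p ∈ rect R, ∀ i, R ≤ dist p (c i) := by
  by_cases h₀ : ∀ i, R ≤ dist 0 (c i)
  · exact ⟨0, ⟨by simpa using hR.le, by simpa using (half_pos hR).le⟩, h₀⟩
  push Not at h₀
  obtain ⟨i₀, hi₀⟩ := h₀
  obtain ⟨A, hA, hAs, x, hx, y, hy, hxy⟩ := exists_arc_subset_sphere_inter_rect hR hi₀
  obtain ⟨p, hp, hfar⟩ := exists_forall_le_dist_of_isPreconnected hc hA
    (hAs.trans inter_subset_left) hx hy hxy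
  exact ⟨p, (hAs hp).2, hfar⟩

theorem sq_add_sq_le_of_add_le {a b u v : ℝ} (hb : 0 < b) (hu : u ∈ Icc 0 a) (hv : 0 ≤ v)
    (h : 2 * a * u + 2 * b * v ≤ a ^ 2 + b ^ 2) :
    u ^ 2 + v ^ 2 ≤ ((a ^ 2 + b ^ 2) / (2 * b)) ^ 2 := by
  rw [div_pow, le_div_iff₀ (by positivity)]
  nlinarith [mul_nonneg hu.1 (sub_nonneg.mpr hu.2), mul_nonneg hv (sub_nonneg.mpr h),
    mul_nonneg (sub_nonneg.mpr h) (sub_nonneg.mpr h)]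

/-- `(a² + b²) / (2b)` is the circumradius of the triangle `(0, 0), (2a, 0), (a, b)`. -/
theorem sq_add_sq_le_or_sub_sq_add_sub_sq_le {a b u v : ℝ} (hb : 0 < b) (hu : u ∈ Icc 0 a)
    (hv : v ∈ Icc 0 b) :
    u ^ 2 + v ^ 2 ≤ ((a ^ 2 + b ^ 2) / (2 * b)) ^ 2 ∨
      (a - u) ^ 2 + (b - v) ^ 2 ≤ ((a ^ 2 + b ^ 2) / (2 * b)) ^ 2 := by
  rcases le_total (2 * a * u + 2 * b * v) (a ^ 2 + b ^ 2) with h | h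
  · exact Or.inl (sq_add_sq_le_of_add_le hb hu hv.1 h)
  · refine Or.inr (sq_add_sq_le_of_add_le hb ⟨?_, ?_⟩ ?_ ?_) <;>
      linarith [hu.1, hu.2, hv.1, hv.2]

theorem exists_nat_mul_le_le_add_one_mul {h u : ℝ} (hh : 0 < h) (N : ℕ) (h₀ : 0 ≤ u)
    (h₁ : u ≤ (N + 1) * h) : ∃ m : ℕ, m ≤ N ∧ m * h ≤ u ∧ u ≤ (m + 1) * h := by
  rcases le_total ⌊u / h⌋₊ N with hN | hN
  · refine ⟨⌊u / h⌋₊, hN, ?_, ?_⟩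
    · exact (le_div_iff₀ hh).mp (Nat.floor_le (div_nonneg h₀ hh.le))
    · exact (div_le_iff₀ hh).mp (Nat.lt_floor_add_one _).le
  · refine ⟨N, le_rfl, (mul_le_mul_of_nonneg_right (Nat.cast_le.mpr hN) hh.le).trans ?_, h₁⟩
    exact (le_div_iff₀ hh).mp (Nat.floor_le (div_nonneg h₀ hh.le))

def gridPt (k j : ℕ) : E2 := pt (-1.19 + 0.14 * k) (-0.5225 + 0.209 * j)

def grid : Finset E2 :=
  ((Finset.range 18 ×ˢ Finset.range 6).filter fun kj => Even (kj.1 + kj.2)).image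
    fun kj => gridPt kj.1 kj.2

theorem gridPt_mem_grid {k j : ℕ} (hk : k < 18) (hj : j < 6) (h : Even (k + j)) :
    gridPt k j ∈ grid := by
  rw [grid, Finset.mem_image]
  exact ⟨(k, j), by simp [hk, hj, h], rfl⟩

theorem card_grid : grid.card = 54 := by
  rw [grid, Finset.card_image_of_injOn]
  · rfl
  · rintro ⟨k, j⟩ - ⟨k', j'⟩ - h
    have h₀ := congrArg (· 0) h
    have h₁ := congrArg (· 1) h
    simp only [gridPt, pt_apply_zero, pt_apply_one] at h₀ h₁
    simp only [Prod.mk.injEq, ← @Nat.cast_inj ℝ]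
    constructor <;> linarith

theorem exists_index_sq_add_sq_le_of_row {u v : ℝ} {m : ℕ} (hm : m ≤ 16)
    (hu₀ : m * 0.14 ≤ u) (hu₁ : u ≤ (m + 1) * 0.14) {j : ℕ} (hj : j < 6)
    (hv : (v - 0.209 * j) ^ 2 ≤ 0.0549 ^ 2) :
    ∃ k j : ℕ, k < 18 ∧ j < 6 ∧ Even (k + j) ∧
      (u - 0.14 * k) ^ 2 + (v - 0.209 * j) ^ 2 ≤ 0.1543 ^ 2 := by
  rcases Nat.even_or_odd (m + j) with h | h
  · exact ⟨m, j, by omega, hj, h, by nlinarith⟩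
  · refine ⟨m + 1, j, by omega, hj, by rw [add_right_comm]; exact h.add_one, ?_⟩
    push_cast
    nlinarith

theorem exists_index_sq_add_sq_le {u v : ℝ} (hu₀ : 0 ≤ u) (hu₁ : u ≤ 2.38) (hv₀ : -0.0549 ≤ v)
    (hv₁ : v ≤ 1.0999) :
    ∃ k j : ℕ, k < 18 ∧ j < 6 ∧ Even (k + j) ∧
      (u - 0.14 * k) ^ 2 + (v - 0.209 * j) ^ 2 ≤ 0.1543 ^ 2 := by
  obtain ⟨m, hm, hmu₀, hmu₁⟩ :=
    exists_nat_mul_le_le_add_one_mul (h := 0.14) (by norm_num) 16 hu₀ (by norm_num; linarith)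
  rcases lt_or_ge v 0 with hv | hv
  · exact exists_index_sq_add_sq_le_of_row hm hmu₀ hmu₁ (j := 0) (by norm_num)
      (by norm_num; nlinarith)
  rcases lt_or_ge 1.045 v with hv' | hv'
  · exact exists_index_sq_add_sq_le_of_row hm hmu₀ hmu₁ (j := 5) (by norm_num)
      (by norm_num; nlinarith)
  obtain ⟨n, hn, hnv₀, hnv₁⟩ :=
    exists_nat_mul_le_le_add_one_mul (h := 0.209) (by norm_num) 4 hv (by norm_num; linarith)
  have hr : ((0.14 ^ 2 + 0.209 ^ 2) / (2 * 0.209) : ℝ) ^ 2 ≤ 0.1543 ^ 2 := by norm_num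
  have hvn : v - 0.209 * n ∈ Icc 0 0.209 := ⟨by linarith, by linarith⟩
  rcases Nat.even_or_odd (m + n) with h | h
  · rcases sq_add_sq_le_or_sub_sq_add_sub_sq_le (a := 0.14) (by norm_num)
      (⟨by linarith, by linarith⟩ : u - 0.14 * m ∈ Icc 0 0.14) hvn with h' | h'
    · exact ⟨m, n, by omega, by omega, h, h'.trans hr⟩
    · refine ⟨m + 1, n + 1, by omega, by omega,
        by rw [add_add_add_comm]; exact h.add even_two, ?_⟩
      push_cast
      linarith
  · rcases sq_add_sq_le_or_sub_sq_add_sub_sq_le (a := 0.14) (by norm_num)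
      (⟨by linarith, by linarith⟩ : 0.14 * (m + 1) - u ∈ Icc 0 0.14) hvn with h' | h'
    · refine ⟨m + 1, n, by omega, by omega, by rw [add_right_comm]; exact h.add_one, ?_⟩
      push_cast
      nlinarith
    · refine ⟨m, n + 1, by omega, by omega, by rw [← add_assoc]; exact h.add_one, ?_⟩
      push_cast
      nlinarith

theorem dist_gridPt_sq (p : E2) (k j : ℕ) :
    dist p (gridPt k j) ^ 2 = (p 0 + 1.19 - 0.14 * k) ^ 2 + (p 1 + 0.5225 - 0.209 * j) ^ 2 := by
  rw [dist_sq_eq_sq_add_sq]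
  simp only [gridPt, pt_apply_zero, pt_apply_one]
  ring

theorem exists_mem_grid_dist_le {p : E2} (hx : |p 0| ≤ 1.1548) (hy : |p 1| ≤ 0.5774) :
    ∃ q ∈ grid, dist p q ≤ 0.1543 := by
  obtain ⟨hx₀, hx₁⟩ := abs_le.mp hx
  obtain ⟨hy₀, hy₁⟩ := abs_le.mp hy
  obtain ⟨k, j, hk, hj, hkj, h⟩ := exists_index_sq_add_sq_le (u := p 0 + 1.19) (v := p 1 + 0.5225)
    (by linarith) (by linarith) (by linarith) (by linarith)
  refine ⟨gridPt k j, gridPt_mem_grid hk hj hkj, ?_⟩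
  rw [← pow_le_pow_iff_left₀ dist_nonneg (by norm_num) two_ne_zero, dist_gridPt_sq]
  exact h

theorem two_div_sqrt_three_mem_Ioo : 2 / √3 ∈ Ioo 1.1544 1.1548 := by
  have h₀ : 1.732 < √3 := (Real.lt_sqrt (by norm_num)).mpr (by norm_num)
  have h₁ : √3 < 1.7321 := (Real.sqrt_lt' (by norm_num)).mpr (by norm_num)
  constructor
  · rw [lt_div_iff₀ (by positivity)]; nlinarith
  · rw [div_lt_iff₀ (by positivity)]; nlinarith

end UnitDiskPacking

open UnitDiskPacking

/-- There is a configuration of 55 points in the plane such that every packing of unit disks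
(closed unit disks with pairwise disjoint interiors) leaves at least one of the points
uncovered. -/
theorem stmt_16 :
    ∃ X : Finset E2, X.card = 55 ∧
      ∀ (ι : Type) (c : ι → E2),
        (Pairwise fun i j => 2 ≤ dist (c i) (c j)) →
        ∃ p ∈ X, ∀ i, 1 < dist p (c i) := by
  obtain ⟨X, hgrid, hX⟩ := Infinite.exists_superset_card_eq grid 55 (by rw [card_grid]; norm_num)
  refine ⟨X, hX, fun ι c hc => ?_⟩
  obtain ⟨hρ₀, hρ₁⟩ := two_div_sqrt_three_mem_Ioo
  have hsep : √3 * (2 / √3) = 2 := mul_div_cancel₀ 2 (by positivity)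
  obtain ⟨p, ⟨hpx, hpy⟩, hp⟩ :=
    exists_mem_rect_forall_le_dist (by positivity) (c := c) (hsep ▸ hc)
  obtain ⟨q, hq, hpq⟩ := exists_mem_grid_dist_le (hpx.trans hρ₁.le) (hpy.trans (by linarith))
  exact ⟨q, hgrid hq, fun i => by linarith [hp i, dist_triangle p q (c i), dist_comm p q]⟩
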